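/- Suppose R contains ℚ (R is a ℚ-algebra). Then every polynomial p ∈ R[X_1,…,X_N] has a unique expression p = Σ_{j≥0} (X·X)^j · p_j where each p_j ∈ R[X_1,…,X_N] is harmonic and only finitely many p_j are nonzero; that is, there is a unique finitely-supported family (p_j)_{j∈ℕ} of harmonic polynomials with p = Σ_j (X·X)^j p_j. Moreover, if p is homogeneous of degree d, then each nonzero p_j is homogeneous of degree d − 2j. -/

import Mathlib

open MvPolynomial

/-- The rotation generator `M_{jk} p = X_j ∂_k p − X_k ∂_j p`. -/
noncomputable def rot {R : Type*} [CommRing R] {N : ℕ} (j k : Fin N)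
    (p : MvPolynomial (Fin N) R) : MvPolynomial (Fin N) R :=
  X j * pderiv k p - X k * pderiv j p

/-- The Laplacian `Δ p = Σ_j ∂_j² p`. -/
noncomputable def lap {R : Type*} [CommRing R] {N : ℕ}
    (p : MvPolynomial (Fin N) R) : MvPolynomial (Fin N) R :=
  ∑ j, pderiv j (pderiv j p)

/-- The polynomial `X·X = X_1² + ⋯ + X_N²`. -/
noncomputable def XX (R : Type*) [CommRing R] (N : ℕ) : MvPolynomial (Fin N) R :=
  ∑ j, X j ^ 2

/-!
For harmonic `h`, homogeneous of degree `m`, Euler's identity gives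
`Δ((X·X)^(j+1) h) = 2(j+1)(N + 2m + 2j) (X·X)^j h`, a nonzero rational multiple when `N ≠ 0`.
So `Δ` maps an expansion `Σ (X·X)^j h_j` to the expansion with entries `c_j h_(j+1)`.
Induction on the length of the expansion gives uniqueness for homogeneous entries, and induction
on the degree (expand `Δp`, then divide by the `c_j`) gives existence for homogeneous `p`.
Both extend to all polynomials through homogeneous components: `Δ` lowers the degree by two, so
the homogeneous components of a harmonic polynomial are harmonic.
-/

open Finset

section Homogeneous

variable {σ R : Type*} [CommSemiring R]

attribute [local instance] MvPolynomial.gradedAlgebra in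
theorem homogeneousComponent_mul_of_isHomogeneous_left {a : MvPolynomial σ R} {i : ℕ}
    (ha : a.IsHomogeneous i) (n : ℕ) (b : MvPolynomial σ R) :
    homogeneousComponent n (a * b) = if i ≤ n then a * homogeneousComponent (n - i) b else 0 := by
  simpa only [← decomposition.decompose'_apply, DirectSum.Decomposition.decompose'_eq] using
    DirectSum.coe_decompose_mul_of_left_mem (homogeneousSubmodule σ R) n ha

theorem homogeneousComponent_pderiv (n : ℕ) (i : σ) (p : MvPolynomial σ R) :
    homogeneousComponent n (pderiv i p) = pderiv i (homogeneousComponent (n + 1) p) := by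
  classical
  ext m
  simp [coeff_homogeneousComponent, coeff_pderiv]

theorem MvPolynomial.IsHomogeneous.smul_of_tower {S : Type*} [SMul S R]
    [SMul S (MvPolynomial σ R)] [IsScalarTower S R (MvPolynomial σ R)] {p : MvPolynomial σ R}
    {n : ℕ} (hp : p.IsHomogeneous n) (s : S) : (s • p).IsHomogeneous n :=
  (mem_homogeneousSubmodule n _).mp ((homogeneousSubmodule σ R n).smul_of_tower_mem s
    ((mem_homogeneousSubmodule n p).mpr hp))

end Homogeneous

section Laplacian

variable {R : Type*} [CommRing R] {N : ℕ}

@[simp]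
theorem lap_zero : lap (0 : MvPolynomial (Fin N) R) = 0 := by
  simp [lap]

theorem lap_sub (p q : MvPolynomial (Fin N) R) : lap (p - q) = lap p - lap q := by
  simp only [lap, map_sub, sum_sub_distrib]

theorem lap_sum {ι : Type*} (s : Finset ι) (f : ι → MvPolynomial (Fin N) R) :
    lap (∑ i ∈ s, f i) = ∑ i ∈ s, lap (f i) := by
  simp only [lap, map_sum]
  exact sum_comm

theorem lap_smul {S : Type*} [SMul S R] [DistribSMul S (MvPolynomial (Fin N) R)]
    [IsScalarTower S R (MvPolynomial (Fin N) R)] (s : S) (p : MvPolynomial (Fin N) R) :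
    lap (s • p) = s • lap p := by
  simp only [lap, Derivation.map_smul_of_tower, smul_sum]

theorem homogeneousComponent_lap (n : ℕ) (p : MvPolynomial (Fin N) R) :
    homogeneousComponent n (lap p) = lap (homogeneousComponent (n + 2) p) := by
  simp only [lap, map_sum, homogeneousComponent_pderiv]

theorem lap_homogeneousComponent_zero (p : MvPolynomial (Fin N) R) :
    lap (homogeneousComponent 0 p) = 0 := by
  simp [lap]

theorem lap_homogeneousComponent_one (p : MvPolynomial (Fin N) R) :
    lap (homogeneousComponent 1 p) = 0 := by
  refine sum_eq_zero fun i _ => ?_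
  rw [← zero_add 1, ← homogeneousComponent_pderiv, homogeneousComponent_zero, pderiv_C]

theorem lap_homogeneousComponent {p : MvPolynomial (Fin N) R} (hp : lap p = 0) :
    ∀ n, lap (homogeneousComponent n p) = 0
  | 0 => lap_homogeneousComponent_zero p
  | 1 => lap_homogeneousComponent_one p
  | n + 2 => by rw [← homogeneousComponent_lap, hp, map_zero]

theorem MvPolynomial.IsHomogeneous.lap {p : MvPolynomial (Fin N) R} {d : ℕ}
    (hp : p.IsHomogeneous d) : (lap p).IsHomogeneous (d - 2) :=
  IsHomogeneous.sum _ _ _ fun i _ => by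
    simpa [Nat.sub_sub] using (hp.pderiv (i := i)).pderiv (i := i)

theorem XX_isHomogeneous : (XX R N).IsHomogeneous 2 :=
  IsHomogeneous.sum _ _ _ fun i _ => isHomogeneous_X_pow i 2

theorem pderiv_XX (i : Fin N) : pderiv i (XX R N) = 2 • X i := by
  classical
  simp [XX, pderiv_X, Pi.single_apply]

theorem lap_XX_mul {p : MvPolynomial (Fin N) R} {m : ℕ} (hp : p.IsHomogeneous m) :
    lap (XX R N * p) = XX R N * lap p + (2 * N + 4 * m) • p := by
  have hi : ∀ i, pderiv i (pderiv i (XX R N * p)) =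
      XX R N * pderiv i (pderiv i p) + 2 • p + 4 • (X i * pderiv i p) := by
    intro i
    simp only [pderiv_mul, pderiv_XX, map_add, map_nsmul, pderiv_X_self]
    ring
  rw [lap, sum_congr rfl fun i _ => hi i, sum_add_distrib, sum_add_distrib, ← mul_sum,
    ← smul_sum, ← smul_sum, hp.sum_X_mul_pderiv, sum_const, card_univ, Fintype.card_fin,
    ← lap]
  module

theorem lap_XX_pow_succ_mul {h : MvPolynomial (Fin N) R} {m : ℕ} (hh : lap h = 0)
    (hm : h.IsHomogeneous m) (j : ℕ) :
    lap (XX R N ^ (j + 1) * h) = (2 * (j + 1) * (N + 2 * m + 2 * j)) • (XX R N ^ j * h) := by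
  induction j with
  | zero =>
    rw [zero_add, pow_one, pow_zero, one_mul, lap_XX_mul hm, hh, mul_zero, zero_add]
    ring
  | succ j ih =>
    rw [pow_succ', mul_assoc, lap_XX_mul ((XX_isHomogeneous.pow (j + 1)).mul hm), ih]
    ring

theorem homogeneousComponent_XX_pow_mul (n k : ℕ) (q : MvPolynomial (Fin N) R) :
    homogeneousComponent n (XX R N ^ k * q) =
      XX R N ^ k * if 2 * k ≤ n then homogeneousComponent (n - 2 * k) q else 0 := by
  rw [homogeneousComponent_mul_of_isHomogeneous_left (XX_isHomogeneous.pow k), mul_ite, mul_zero]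

theorem exists_sum_XX_pow_mul_of_lap_eq_zero {d : ℕ} {p : MvPolynomial (Fin N) R}
    (hp : p.IsHomogeneous d) (hlap : lap p = 0) :
    ∃ g : ℕ → MvPolynomial (Fin N) R, (∀ j, lap (g j) = 0) ∧
      (∀ j, (g j).IsHomogeneous (d - 2 * j)) ∧
      (∀ j, g j ≠ 0 → j ∈ range (d / 2 + 1)) ∧
      p = ∑ j ∈ range (d / 2 + 1), XX R N ^ j * g j := by
  refine ⟨Pi.single 0 p, fun j => ?_, fun j => ?_, fun j hj => ?_, ?_⟩
  · rcases j with _ | j <;> simp [hlap]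
  · rcases j with _ | j <;> simp [hp, isHomogeneous_zero]
  · rcases j with _ | j <;> simp_all
  · rw [sum_eq_single_of_mem 0 (by simp) fun j _ hj => by simp [hj]]
    simp

end Laplacian

section Expansion

variable {R : Type*} [CommRing R] [Algebra ℚ R] {N : ℕ}

theorem eq_zero_of_sum_XX_pow_mul_eq_zero_of_isHomogeneous (hN : N ≠ 0) :
    ∀ (n : ℕ) (m : ℕ → ℕ) (g : ℕ → MvPolynomial (Fin N) R), (∀ j, lap (g j) = 0) →
      (∀ j, (g j).IsHomogeneous (m j)) → ∑ j ∈ range n, XX R N ^ j * g j = 0 →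
      ∀ j < n, g j = 0
  | 0, _, _, _, _, _, j, hj => absurd hj j.not_lt_zero
  | n + 1, m, g, hg, hgm, hsum, j, hj => by
    have hlap : ∑ k ∈ range n,
        XX R N ^ k * ((2 * (k + 1) * (N + 2 * m (k + 1) + 2 * k)) • g (k + 1)) = 0 := by
      have := congrArg lap hsum
      rw [lap_sum, sum_range_succ', pow_zero, one_mul, hg 0, add_zero] at this
      simpa only [lap_XX_pow_succ_mul (hg _) (hgm _), mul_smul_comm, lap_zero] using this
    have hsucc : ∀ k < n, g (k + 1) = 0 := fun k hk => by
      have := eq_zero_of_sum_XX_pow_mul_eq_zero_of_isHomogeneous hN n (fun k => m (k + 1))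
        _ (fun k => by rw [lap_smul, hg, smul_zero]) (fun k => (hgm _).smul_of_tower _)
        hlap k hk
      rw [← Nat.cast_smul_eq_nsmul ℚ] at this
      exact (smul_eq_zero.mp this).resolve_left (by positivity)
    rcases j with _ | k
    · rwa [sum_range_succ', sum_eq_zero fun k hk => by rw [hsucc k (mem_range.mp hk), mul_zero],
        zero_add, pow_zero, one_mul] at hsum
    · exact hsucc k (Nat.lt_of_succ_lt_succ hj)

theorem eq_zero_of_sum_XX_pow_mul_eq_zero (hN : N ≠ 0) {n : ℕ}
    {g : ℕ → MvPolynomial (Fin N) R} (hg : ∀ j, lap (g j) = 0)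
    (hsum : ∑ j ∈ range n, XX R N ^ j * g j = 0) {j : ℕ} (hj : j < n) : g j = 0 := by
  rw [← sum_homogeneousComponent (g j)]
  refine sum_eq_zero fun e _ => ?_
  -- The degree `e + 2j` part of the relation has homogeneous harmonic entries, the `j`-th being
  -- the degree `e` part of `g j`.
  have hcomp := congrArg (homogeneousComponent (e + 2 * j)) hsum
  simp only [map_sum, homogeneousComponent_XX_pow_mul, map_zero] at hcomp
  simpa using eq_zero_of_sum_XX_pow_mul_eq_zero_of_isHomogeneous hN n
    (fun k => e + 2 * j - 2 * k) _
    (fun k => by split_ifs <;> simp [lap_homogeneousComponent (hg k)])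
    (fun k => by split_ifs <;> simp [homogeneousComponent_isHomogeneous, isHomogeneous_zero])
    hcomp j hj

theorem exists_sum_XX_pow_mul_of_isHomogeneous (hN : N ≠ 0) :
    ∀ (d : ℕ) {p : MvPolynomial (Fin N) R}, p.IsHomogeneous d →
      ∃ g : ℕ → MvPolynomial (Fin N) R, (∀ j, lap (g j) = 0) ∧
        (∀ j, (g j).IsHomogeneous (d - 2 * j)) ∧
        (∀ j, g j ≠ 0 → j ∈ range (d / 2 + 1)) ∧
        p = ∑ j ∈ range (d / 2 + 1), XX R N ^ j * g j := by
  intro d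
  induction d using Nat.twoStepInduction with
  | zero =>
    intro p hp
    exact exists_sum_XX_pow_mul_of_lap_eq_zero hp
      (homogeneousComponent_eq_self hp ▸ lap_homogeneousComponent_zero p)
  | one =>
    intro p hp
    exact exists_sum_XX_pow_mul_of_lap_eq_zero hp
      (homogeneousComponent_eq_self hp ▸ lap_homogeneousComponent_one p)
  | more d ih _ =>
    intro p hp
    obtain ⟨h, hh, hhd, hsupp, hsum⟩ := ih (by simpa using hp.lap)
    set q : ℕ → MvPolynomial (Fin N) R :=
      fun k => ((2 * (k + 1) * (N + 2 * (d - 2 * k) + 2 * k) : ℕ) : ℚ)⁻¹ • h k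
    have hq : ∀ k, lap (q k) = 0 := fun k => by simp only [q, lap_smul, hh, smul_zero]
    have hqd : ∀ k, (q k).IsHomogeneous (d - 2 * k) := fun k => (hhd k).smul_of_tower _
    have hlapq : ∀ k, lap (XX R N ^ (k + 1) * q k) = XX R N ^ k * h k := fun k => by
      rw [lap_XX_pow_succ_mul (hq k) (hqd k), mul_smul_comm, ← Nat.cast_smul_eq_nsmul ℚ,
        smul_inv_smul₀ (by positivity)]
    refine ⟨fun | 0 => p - ∑ k ∈ range (d / 2 + 1), XX R N ^ (k + 1) * q k | k + 1 => q k,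
      fun j => ?_, fun j => ?_, fun j hj => ?_, ?_⟩
    · rcases j with _ | k
      · rw [lap_sub, lap_sum, sum_congr rfl fun k _ => hlapq k, ← hsum, sub_self]
      · exact hq k
    · rcases j with _ | k
      · refine hp.sub (IsHomogeneous.sum _ _ _ fun k hk => ?_)
        have hkd : 2 * (k + 1) + (d - 2 * k) = d + 2 := by have := mem_range.mp hk; omega
        exact hkd ▸ (XX_isHomogeneous.pow (k + 1)).mul (hqd k)
      · exact (by omega : d - 2 * k = d + 2 - 2 * (k + 1)) ▸ hqd k
    · rcases j with _ | k
      · simp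
      · have hk : h k ≠ 0 := fun h0 => hj (by simp [q, h0])
        have := mem_range.mp (hsupp k hk)
        exact mem_range.mpr (by omega)
    · rw [show (d + 2) / 2 + 1 = d / 2 + 1 + 1 by omega, sum_range_succ']
      simp

theorem exists_finsupp_sum_XX_pow_mul_of_isHomogeneous (hN : N ≠ 0) {d : ℕ}
    {p : MvPolynomial (Fin N) R} (hp : p.IsHomogeneous d) :
    ∃ f : ℕ →₀ MvPolynomial (Fin N) R, (∀ j, lap (f j) = 0) ∧
      (∀ j, (f j).IsHomogeneous (d - 2 * j)) ∧ (∀ j, f j ≠ 0 → 2 * j ≤ d) ∧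
      p = f.sum fun j q => XX R N ^ j * q := by
  obtain ⟨g, hg, hgd, hsupp, hsum⟩ := exists_sum_XX_pow_mul_of_isHomogeneous hN d hp
  refine ⟨Finsupp.onFinset _ g hsupp, hg, hgd, fun j hj => ?_, ?_⟩
  · have := mem_range.mp (hsupp j hj)
    omega
  · rwa [Finsupp.onFinset_sum hsupp fun _ => mul_zero _]

theorem exists_finsupp_sum_XX_pow_mul (hN : N ≠ 0) (p : MvPolynomial (Fin N) R) :
    ∃ f : ℕ →₀ MvPolynomial (Fin N) R, (∀ j, lap (f j) = 0) ∧
      p = f.sum fun j q => XX R N ^ j * q := by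
  choose F hF _ _ hsum using fun d =>
    exists_finsupp_sum_XX_pow_mul_of_isHomogeneous hN (homogeneousComponent_isHomogeneous d p)
  refine ⟨∑ d ∈ range (p.totalDegree + 1), F d, fun j => ?_, ?_⟩
  · rw [Finsupp.finsetSum_apply, lap_sum]
    exact sum_eq_zero fun d _ => hF d j
  · rw [← Finsupp.sum_finsetSum_index (fun _ => mul_zero _) fun _ _ _ => mul_add _ _ _]
    conv_lhs => rw [← sum_homogeneousComponent p]
    exact sum_congr rfl fun d _ => hsum d

theorem finsupp_eq_of_sum_XX_pow_mul_eq (hN : N ≠ 0) {f g : ℕ →₀ MvPolynomial (Fin N) R}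
    (hf : ∀ j, lap (f j) = 0) (hg : ∀ j, lap (g j) = 0)
    (h : (f.sum fun j q => XX R N ^ j * q) = g.sum fun j q => XX R N ^ j * q) : f = g := by
  obtain ⟨n, hn⟩ := (f.support ∪ g.support).exists_nat_subset_range
  have hfn := union_subset_left hn
  have hgn := union_subset_right hn
  ext j : 1
  rcases lt_or_ge j n with hj | hj
  · refine sub_eq_zero.mp (eq_zero_of_sum_XX_pow_mul_eq_zero hN (g := fun k => f k - g k)
      (fun k => by rw [lap_sub, hf, hg, sub_self]) ?_ hj)
    rw [Finsupp.sum_of_support_subset f hfn _ fun _ _ => mul_zero _,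
      Finsupp.sum_of_support_subset g hgn _ fun _ _ => mul_zero _] at h
    simp only [mul_sub, sum_sub_distrib, h, sub_self]
  · have hjn : j ∉ range n := by simpa using hj
    rw [Finsupp.notMem_support_iff.mp fun hj' => hjn (hfn hj'),
      Finsupp.notMem_support_iff.mp fun hj' => hjn (hgn hj')]

end Expansion

/-- over a ℚ-algebra, every polynomial has a unique expansion
`p = Σ_j (X·X)^j p_j` with all `p_j` harmonic (finitely supported family); and if `p`
is homogeneous of degree `d` then each nonzero `p_j` is homogeneous of degree `d − 2j`. -/
theorem stmt6 {R : Type*} [CommRing R] [Algebra ℚ R] {N : ℕ} (hN : 2 ≤ N)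
    (p : MvPolynomial (Fin N) R) :
    (∃! f : ℕ →₀ MvPolynomial (Fin N) R,
      (∀ j, lap (f j) = 0) ∧ p = f.sum fun j q => XX R N ^ j * q) ∧
    (∀ d : ℕ, p.IsHomogeneous d →
      ∀ f : ℕ →₀ MvPolynomial (Fin N) R,
        (∀ j, lap (f j) = 0) → p = (f.sum fun j q => XX R N ^ j * q) →
        ∀ j, f j ≠ 0 → 2 * j ≤ d ∧ (f j).IsHomogeneous (d - 2 * j)) := by
  have hN0 : N ≠ 0 := by omega
  refine ⟨?_, fun d hp f hf hsum j hj => ?_⟩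
  · obtain ⟨F, hF, hFsum⟩ := exists_finsupp_sum_XX_pow_mul hN0 p
    exact ⟨F, ⟨hF, hFsum⟩, fun f ⟨hf, hsum⟩ =>
      finsupp_eq_of_sum_XX_pow_mul_eq hN0 hf hF (hsum ▸ hFsum)⟩
  · obtain ⟨g, hg, hgd, hgsupp, hgsum⟩ := exists_finsupp_sum_XX_pow_mul_of_isHomogeneous hN0 hp
    obtain rfl : f = g := finsupp_eq_of_sum_XX_pow_mul_eq hN0 hf hg (hsum ▸ hgsum)
    exact ⟨hgsupp j hj, hgd j⟩
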